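/- For every n×n complex matrix M, every ε > 0, and every z ∈ ℂ, the following are equivalent: (i) z ∈ σ_ε(M), i.e. z ∈ σ(M) or ‖(M - z·I)⁻¹‖ > 1/ε; (ii) there exists an n×n complex matrix V with operator norm ‖V‖ < ε such that z ∈ σ(M + V); (iii) there exists a nonzero vector u ∈ ℂⁿ with ‖(M - z·I) u‖ < ε ‖u‖. -/

import Mathlib

open Matrix

/-- The ℓ² operator norm of a complex matrix, viewed as a bounded operator
on `EuclideanSpace ℂ (Fin n)`. -/
noncomputable def matNorm {n : ℕ} (M : Matrix (Fin n) (Fin n) ℂ) : ℝ :=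
  ‖Matrix.toEuclideanCLM (𝕜 := ℂ) (n := Fin n) M‖

/-- The action of a complex matrix on `EuclideanSpace ℂ (Fin n)`. -/
noncomputable def matAct {n : ℕ} (M : Matrix (Fin n) (Fin n) ℂ)
    (v : EuclideanSpace ℂ (Fin n)) : EuclideanSpace ℂ (Fin n) :=
  Matrix.toEuclideanCLM (𝕜 := ℂ) (n := Fin n) M v

/-- The weighted Hermitian inner product `⟨v,u⟩_G := ⟨F v, F u⟩₂`, conjugate-linear in the
first argument. -/
noncomputable def gInner {n : ℕ} (F : Matrix (Fin n) (Fin n) ℂ)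
    (v u : EuclideanSpace ℂ (Fin n)) : ℂ :=
  inner ℂ (matAct F v) (matAct F u)

/-- The weighted norm `‖u‖_G := ‖F u‖₂`. -/
noncomputable def gNorm {n : ℕ} (F : Matrix (Fin n) (Fin n) ℂ)
    (u : EuclideanSpace ℂ (Fin n)) : ℝ :=
  ‖matAct F u‖

/-- The ε-pseudospectrum of a complex matrix:
`σ_ε(M) := σ(M) ∪ {z ∉ σ(M) : ‖(M - z·I)⁻¹‖ > 1/ε}`. -/
noncomputable def pseudospectrum {n : ℕ} (ε : ℝ) (M : Matrix (Fin n) (Fin n) ℂ) : Set ℂ :=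
  spectrum ℂ M ∪ {z | z ∉ spectrum ℂ M ∧ 1 / ε < matNorm ((M - z • 1)⁻¹)}

/-!
Put `A = M - z • 1`. Everything is reduced to the existence of a pseudoeigenvector, a `u ≠ 0`
with `‖A u‖ < ε ‖u‖`. If `z ∈ σ(M)` an eigenvector is one. Otherwise `u = A⁻¹ x` is one exactly
when `‖A⁻¹ x‖ > ‖x‖ / ε`, and such `x` exist iff `‖A⁻¹‖ > 1 / ε`. If `(M + V - z • 1) u = 0` then
`‖A u‖ = ‖V u‖ < ε ‖u‖`; conversely the rank-one `V = -‖u‖⁻² (A u) u*` has norm `‖A u‖ / ‖u‖ < ε`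
and `(A + V) u = 0`.
-/

namespace ContinuousLinearMap

theorem mem_spectrum_iff_exists_apply_eq_smul {𝕜 E : Type*} [NontriviallyNormedField 𝕜]
    [CompleteSpace 𝕜] [NormedAddCommGroup E] [NormedSpace 𝕜 E] [FiniteDimensional 𝕜 E]
    (f : E →L[𝕜] E) (μ : 𝕜) :
    μ ∈ spectrum 𝕜 f ↔ ∃ u ≠ 0, f u = μ • u := by
  have : CompleteSpace E := FiniteDimensional.complete 𝕜 E
  rw [spectrum_eq, ← Module.End.hasEigenvalue_iff_mem_spectrum, Module.End.hasEigenvalue_iff,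
    Submodule.ne_bot_iff]
  simp only [Module.End.mem_eigenspace_iff, coe_coe]
  exact exists_congr fun u => and_comm

theorem exists_norm_apply_lt_mul_iff_inv_lt_norm {𝕜 E F : Type*} [DenselyNormedField 𝕜]
    [NormedAddCommGroup E] [NormedSpace 𝕜 E] [NormedAddCommGroup F] [NormedSpace 𝕜 F]
    {T : E →L[𝕜] F} {S : F →L[𝕜] E} (hST : Function.LeftInverse S T)
    (hTS : Function.RightInverse S T) {ε : ℝ} (hε : 0 < ε) :
    (∃ u ≠ 0, ‖T u‖ < ε * ‖u‖) ↔ ε⁻¹ < ‖S‖ := by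
  constructor
  · rintro ⟨u, hu, hTu⟩
    have hTu0 : 0 < ‖T u‖ := norm_pos_iff.mpr fun h => hu (by rw [← hST u, h, map_zero])
    calc ε⁻¹ < ‖u‖ / ‖T u‖ := by rwa [lt_div_iff₀ hTu0, inv_mul_lt_iff₀ hε]
      _ = ‖S (T u)‖ / ‖T u‖ := by rw [hST u]
      _ ≤ ‖S‖ := S.ratio_le_opNorm _
  · intro h
    obtain ⟨x, hx, hSx⟩ := S.exists_lt_apply_of_lt_opNorm h
    have hSx' : 1 < ε * ‖S x‖ := by rwa [inv_lt_iff_one_lt_mul₀' hε] at hSx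
    refine ⟨S x, norm_pos_iff.mp ((inv_pos.mpr hε).trans hSx), ?_⟩
    rw [hTS x]
    linarith

open InnerProductSpace in
theorem exists_norm_apply_lt_mul_iff_exists_perturbation {𝕜 E F : Type*} [RCLike 𝕜]
    [NormedAddCommGroup E] [InnerProductSpace 𝕜 E] [NormedAddCommGroup F] [NormedSpace 𝕜 F]
    (T : E →L[𝕜] F) (ε : ℝ) :
    (∃ u ≠ 0, ‖T u‖ < ε * ‖u‖) ↔ ∃ V : E →L[𝕜] F, ‖V‖ < ε ∧ ∃ u ≠ 0, (T + V) u = 0 := by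
  constructor
  · rintro ⟨u, hu, hTu⟩
    have hu' : 0 < ‖u‖ := norm_pos_iff.mpr hu
    refine ⟨-((‖u‖ : 𝕜) ^ 2)⁻¹ • rankOne 𝕜 (T u) u, ?_, u, hu, ?_⟩
    · calc ‖-((‖u‖ : 𝕜) ^ 2)⁻¹ • rankOne 𝕜 (T u) u‖ = ‖T u‖ / ‖u‖ := by
            simp only [norm_smul, norm_rankOne, norm_neg, norm_inv, norm_pow, RCLike.norm_ofReal,
              abs_norm]
            field_simp
        _ < ε := by rwa [div_lt_iff₀ hu']
    · simp [inner_self_eq_norm_sq_to_K, smul_smul, hu]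
  · rintro ⟨V, hV, u, hu, hTVu⟩
    refine ⟨u, hu, ?_⟩
    rw [_root_.add_apply, add_eq_zero_iff_eq_neg] at hTVu
    calc ‖T u‖ = ‖V u‖ := by rw [hTVu, norm_neg]
      _ ≤ ‖V‖ * ‖u‖ := V.le_opNorm u
      _ < ε * ‖u‖ := by gcongr

end ContinuousLinearMap

section

variable {n : ℕ}

theorem mem_spectrum_iff_exists_matAct_sub_smul_one_eq_zero (B : Matrix (Fin n) (Fin n) ℂ)
    (z : ℂ) : z ∈ spectrum ℂ B ↔ ∃ u ≠ 0, matAct (B - z • 1) u = 0 := by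
  rw [← AlgEquiv.spectrum_eq (toEuclideanCLM (𝕜 := ℂ) (n := Fin n)) B,
    ContinuousLinearMap.mem_spectrum_iff_exists_apply_eq_smul]
  simp [matAct, sub_eq_zero]

theorem exists_matNorm_lt_mem_spectrum_add_iff (M : Matrix (Fin n) (Fin n) ℂ) (ε : ℝ) (z : ℂ) :
    (∃ V : Matrix (Fin n) (Fin n) ℂ, matNorm V < ε ∧ z ∈ spectrum ℂ (M + V)) ↔
      ∃ u ≠ 0, ‖matAct (M - z • 1) u‖ < ε * ‖u‖ := by
  refine Iff.trans ?_ (ContinuousLinearMap.exists_norm_apply_lt_mul_iff_exists_perturbation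
    (toEuclideanCLM (𝕜 := ℂ) (n := Fin n) (M - z • 1)) ε).symm
  refine (toEuclideanCLM (𝕜 := ℂ) (n := Fin n)).toEquiv.exists_congr fun V => ?_
  rw [mem_spectrum_iff_exists_matAct_sub_smul_one_eq_zero, add_sub_right_comm]
  simp only [matNorm, matAct, map_add]
  exact Iff.rfl

theorem mem_pseudospectrum_iff_exists_norm_matAct_lt (M : Matrix (Fin n) (Fin n) ℂ) {ε : ℝ}
    (hε : 0 < ε) (z : ℂ) :
    z ∈ pseudospectrum ε M ↔ ∃ u ≠ 0, ‖matAct (M - z • 1) u‖ < ε * ‖u‖ := by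
  by_cases hz : z ∈ spectrum ℂ M
  · obtain ⟨u, hu, hMu⟩ := (mem_spectrum_iff_exists_matAct_sub_smul_one_eq_zero M z).1 hz
    exact iff_of_true (Or.inl hz) ⟨u, hu, by rw [hMu, norm_zero]; positivity⟩
  · have hdet : IsUnit (M - z • 1).det := by
      rw [← isUnit_iff_isUnit_det, ← IsUnit.neg_iff, neg_sub, ← Algebra.algebraMap_eq_smul_one]
      exact spectrum.notMem_iff.1 hz
    simp only [pseudospectrum, Set.mem_union, hz, false_or, Set.mem_ofPred_eq, not_false_eq_true,
      true_and, one_div]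
    refine (ContinuousLinearMap.exists_norm_apply_lt_mul_iff_inv_lt_norm
      (S := toEuclideanCLM (𝕜 := ℂ) (n := Fin n) (M - z • 1)⁻¹)
      (fun u => ?_) (fun u => ?_) hε).symm
    · rw [← mul_apply_eq_comp, ← map_mul, nonsing_inv_mul _ hdet, map_one, one_apply_eq_self]
    · rw [← mul_apply_eq_comp, ← map_mul, mul_nonsing_inv _ hdet, map_one, one_apply_eq_self]

end

/-- The three equivalent characterizations of the ε-pseudospectrum: the resolvent-norm
definition, the perturbative definition, and the pseudoeigenvector definition. -/
theorem pseudospectrum_equiv_defs {n : ℕ} (M : Matrix (Fin n) (Fin n) ℂ)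
    (ε : ℝ) (hε : 0 < ε) (z : ℂ) :
    (z ∈ pseudospectrum ε M ↔
        ∃ V : Matrix (Fin n) (Fin n) ℂ, matNorm V < ε ∧ z ∈ spectrum ℂ (M + V)) ∧
      (z ∈ pseudospectrum ε M ↔
        ∃ u : EuclideanSpace ℂ (Fin n), u ≠ 0 ∧ ‖matAct (M - z • 1) u‖ < ε * ‖u‖) :=
  ⟨(mem_pseudospectrum_iff_exists_norm_matAct_lt M hε z).trans
    (exists_matNorm_lt_mem_spectrum_add_iff M ε z).symm,
   mem_pseudospectrum_iff_exists_norm_matAct_lt M hε z⟩
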